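/- arXiv:0708.0865 — 2 statements merged into one kernel-verified Lean document; each statement's English description precedes it below -/
import Mathlib

section
/- Let Λ : ℝ^d → ℝ be convex with Λ(0)=0, and suppose Λ is finite on all of ℝ^d. Let f : [0,1] → ℝ^d with f(0)=0 be a function that is NOT of bounded variation. Then sup over all finite partitions 0 < t₁ < ⋯ < t_k ≤ 1 (with t₀ = 0) and all (λ₁,…,λ_k) ∈ (ℝ^d)^k of ∑_{i=1}^k [λ_i·(f(t_i)−f(t_{i−1})) − (t_i − t_{i−1})Λ(λ_i)] equals +∞. -/
open Matrix

lemma sign_mul_self_eq_abs (x : ℝ) : Real.sign x * x = |x| := by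
  rcases lt_trichotomy x 0 with h | rfl | h
  · rw [Real.sign_of_neg h, abs_of_neg h]; ring
  · simp
  · rw [Real.sign_of_pos h, abs_of_pos h]; ring

lemma sign_mem_finset (x : ℝ) : Real.sign x ∈ ({-1, 0, 1} : Finset ℝ) := by
  rcases lt_trichotomy x 0 with h | rfl | h
  · simp [Real.sign_of_neg h]
  · simp
  · simp [Real.sign_of_pos h]

/-- If `Λ : ℝ^d → ℝ` is finite convex with `Λ(0)=0` and `f : [0,1] → ℝ^d`
with `f(0)=0` is not of bounded variation, then the supremum over partitions
`0 = t₀ < t₁ < ⋯ < t_k ≤ 1` and `λ₁,…,λ_k` of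
`∑ᵢ [λᵢ·(f(tᵢ)−f(tᵢ₋₁)) − (tᵢ−tᵢ₋₁)Λ(λᵢ)]` is `+∞`. -/
theorem stmt13
    {d : ℕ} (Λ : (Fin d → ℝ) → ℝ) (hconv : ConvexOn ℝ Set.univ Λ)
    (hΛ0 : Λ 0 = 0)
    (f : ℝ → Fin d → ℝ) (hf0 : f 0 = 0)
    (hnotBV : ¬ ∃ M : ℝ, ∀ (k : ℕ) (t : ℕ → ℝ), t 0 = 0 →
      (∀ i < k, t i < t (i + 1)) → t k ≤ 1 →
      ∑ i ∈ Finset.range k, ‖f (t (i + 1)) - f (t i)‖ ≤ M) :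
    ∀ M : ℝ, ∃ (k : ℕ) (t : ℕ → ℝ) (lam : ℕ → Fin d → ℝ),
      t 0 = 0 ∧ (∀ i < k, t i < t (i + 1)) ∧ t k ≤ 1 ∧
      M < ∑ i ∈ Finset.range k,
        (lam i ⬝ᵥ (f (t (i + 1)) - f (t i)) - (t (i + 1) - t i) * Λ (lam i)) := by
  intro M
  push_neg at hnotBV
  set S : Finset (Fin d → ℝ) := Fintype.piFinset (fun _ => ({-1, 0, 1} : Finset ℝ))
    with hSdef
  have h0S : (0 : Fin d → ℝ) ∈ S := by
    simp [hSdef, Fintype.mem_piFinset]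
  have hSne : S.Nonempty := ⟨0, h0S⟩
  set C : ℝ := S.sup' hSne Λ with hCdef
  have hC0 : 0 ≤ C := hΛ0 ▸ Finset.le_sup' Λ h0S
  obtain ⟨k, t, ht0, htmono, htk, hvar⟩ := hnotBV (M + C)
  refine ⟨k, t, fun i j => Real.sign (f (t (i + 1)) j - f (t i) j), ht0, htmono, htk, ?_⟩
  have hterm : ∀ i ∈ Finset.range k,
      ‖f (t (i + 1)) - f (t i)‖ - (t (i + 1) - t i) * C ≤
      (fun j => Real.sign (f (t (i + 1)) j - f (t i) j)) ⬝ᵥ (f (t (i + 1)) - f (t i))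
        - (t (i + 1) - t i) * Λ (fun j => Real.sign (f (t (i + 1)) j - f (t i) j)) := by
    intro i hi
    have hΔt : 0 ≤ t (i + 1) - t i :=
      sub_nonneg.2 (htmono i (Finset.mem_range.1 hi)).le
    have hdot : ‖f (t (i + 1)) - f (t i)‖ ≤
        (fun j => Real.sign (f (t (i + 1)) j - f (t i) j)) ⬝ᵥ (f (t (i + 1)) - f (t i)) := by
      have h1 : ‖f (t (i + 1)) - f (t i)‖ ≤ ∑ j, |f (t (i + 1)) j - f (t i) j| := by
        have hnn : (0 : ℝ) ≤ ∑ j, |f (t (i + 1)) j - f (t i) j| :=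
          Finset.sum_nonneg fun j _ => abs_nonneg _
        refine (pi_norm_le_iff_of_nonneg hnn).2 fun j => ?_
        rw [Pi.sub_apply, Real.norm_eq_abs]
        exact Finset.single_le_sum (f := fun j => |f (t (i + 1)) j - f (t i) j|)
          (fun j _ => abs_nonneg _) (Finset.mem_univ j)
      have h2 : (fun j => Real.sign (f (t (i + 1)) j - f (t i) j)) ⬝ᵥ
          (f (t (i + 1)) - f (t i)) = ∑ j, |f (t (i + 1)) j - f (t i) j| := by
        simp only [dotProduct, Pi.sub_apply]
        exact Finset.sum_congr rfl fun j _ => sign_mul_self_eq_abs _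
      linarith
    have hΛle : Λ (fun j => Real.sign (f (t (i + 1)) j - f (t i) j)) ≤ C := by
      refine Finset.le_sup' Λ ?_
      simp only [hSdef, Fintype.mem_piFinset]
      exact fun j => sign_mem_finset _
    have := mul_le_mul_of_nonneg_left hΛle hΔt
    linarith
  have hsum : ∑ i ∈ Finset.range k, (t (i + 1) - t i) = t k := by
    rw [Finset.sum_range_sub, ht0, sub_zero]
  have hLB : (∑ i ∈ Finset.range k, ‖f (t (i + 1)) - f (t i)‖) - t k * C ≤
      ∑ i ∈ Finset.range k,
        ((fun j => Real.sign (f (t (i + 1)) j - f (t i) j)) ⬝ᵥ (f (t (i + 1)) - f (t i))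
          - (t (i + 1) - t i) * Λ (fun j => Real.sign (f (t (i + 1)) j - f (t i) j))) := by
    calc (∑ i ∈ Finset.range k, ‖f (t (i + 1)) - f (t i)‖) - t k * C
        = ∑ i ∈ Finset.range k,
            (‖f (t (i + 1)) - f (t i)‖ - (t (i + 1) - t i) * C) := by
          rw [Finset.sum_sub_distrib, ← Finset.sum_mul, hsum]
      _ ≤ _ := Finset.sum_le_sum hterm
  have htkC : t k * C ≤ C := mul_le_of_le_one_left hC0 htk
  linarith
end

section
/- Let f ∈ L¹([0,1]) and suppose f is not absolutely continuous (as a function of bounded variation with f(0)=0, it fails the ε-δ characterization: there exist ε>0 and disjoint intervals (r_i^n, s_i^n) ⊆ [0,1] with ∑_i (s_i^n − r_i^n) → 0 but ∑_i |f(s_i^n) − f(r_i^n)| ≥ ε for all n). Let Λ : ℝ^d → ℝ be convex with Λ(0)=0 and Λ(λ)=O(|λ|²) near 0, and for 1/2<α<1 let Λ^{rl}_{t₁,…,t_k} be as above. Then sup over finite partitions (t₁,…,t_k) of sup over λ̄ of ∑_i λ_i·(f(t_i) − f(t_{i−1})) − Λ^{rl}_{t₁,…,t_k}(λ̄) equals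 +∞. -/
/-!
Interleave the bad intervals into a partition `0 ≤ r₀ < s₀ ≤ r₁ < ⋯ < s_{k-1} ≤ 1` and put
`λ = A • u_j` on the slot `[r_j, s_j]`, where `u_j` is a unit vector dual to `f s_j - f r_j`,
and `λ = 0` on the gaps; the linear term is then `A ∑ ‖f s_j - f r_j‖ ≥ A ε`. At the point `x`
the argument of `Λ` has norm at most `(1 - α) A S(x)`, where `S(x)` is the mass of `|y| ^ (-α)`
on the slots shifted by `x`. As the slots are disjoint of total length `ℓ`,
`S ≤ (1 + 2 / (1 - α)) ℓ ^ (1 - α)` uniformly, and `S(x) ≤ 2 (1 + |x|) ^ (-α)` once `ℓ` is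
small. Interpolating between these two bounds in the quadratic estimate for `Λ` near `0` gives
`|Λ^{rl}| ≲ ℓ ^ ((1 - α) (2 - γ)) ∫ (1 + |x|) ^ (-α γ)` for any `γ < 2` with `α γ > 1`, which
tends to `0` with `ℓ`. Hence the rate exceeds `A ε - 1` for every `A`.
-/

open MeasureTheory Matrix

open Finset Filter Topology Set Real

section Partition

variable {X : Type*}

/-- The partition `a, r 0, s 0, r 1, s 1, …`. -/
def interleave (a : X) (r s : ℕ → X) : ℕ → X
  | 0 => a
  | i + 1 => if Even i then r (i / 2) else s (i / 2)

@[simp] lemma interleave_zero (a : X) (r s : ℕ → X) : interleave a r s 0 = a := rfl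

@[simp] lemma interleave_two_mul_add_one (a : X) (r s : ℕ → X) (j : ℕ) :
    interleave a r s (2 * j + 1) = r j := by
  simp [interleave]

@[simp] lemma interleave_two_mul_add_two (a : X) (r s : ℕ → X) (j : ℕ) :
    interleave a r s (2 * j + 2) = s j := by
  simp [interleave, Nat.add_div_of_dvd_right]

lemma interleave_le_succ {a : ℝ} {r s : ℕ → ℝ} {k : ℕ} (ha : 0 < k → a ≤ r 0)
    (hrs : ∀ j < k, r j ≤ s j) (hsr : ∀ j, j + 1 < k → s j ≤ r (j + 1)) :
    ∀ i < 2 * k, interleave a r s i ≤ interleave a r s (i + 1) := by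
  intro i hi
  rcases i with _ | i
  · simpa [interleave] using ha (by omega)
  obtain ⟨j, rfl | rfl⟩ := Nat.even_or_odd' i
  · simpa using hrs j (by omega)
  · simpa [show 2 * j + 1 + 1 + 1 = 2 * (j + 1) + 1 by ring] using hsr j (by omega)

lemma interleave_two_mul_le {a b : ℝ} {r s : ℕ → ℝ} {k : ℕ} (ha : a ≤ b)
    (hs : ∀ j < k, s j ≤ b) : interleave a r s (2 * k) ≤ b := by
  rcases k with _ | k
  · simpa using ha
  · simpa [Nat.mul_succ] using hs k (by omega)

variable [AddCommMonoid X]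

def oddSlots (v : ℕ → X) (i : ℕ) : X := if Even i then 0 else v (i / 2)

@[simp] lemma oddSlots_two_mul (v : ℕ → X) (j : ℕ) : oddSlots v (2 * j) = 0 := by
  simp [oddSlots]

@[simp] lemma oddSlots_two_mul_add_one (v : ℕ → X) (j : ℕ) : oddSlots v (2 * j + 1) = v j := by
  simp [oddSlots, show (2 * j + 1) / 2 = j by omega]

lemma sum_range_two_mul (F : ℕ → X) (k : ℕ) :
    ∑ i ∈ range (2 * k), F i = ∑ j ∈ range k, (F (2 * j) + F (2 * j + 1)) := by
  induction k with
  | zero => simp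
  | succ k ih => rw [Nat.mul_succ, sum_range_succ, sum_range_succ, sum_range_succ, ih, add_assoc]

lemma sum_range_two_mul_of_even_eq_zero {F : ℕ → X} (hF : ∀ j, F (2 * j) = 0) (k : ℕ) :
    ∑ i ∈ range (2 * k), F i = ∑ j ∈ range k, F (2 * j + 1) := by
  simp [sum_range_two_mul, hF]

end Partition

lemma exists_dotProduct_eq_norm {d : ℕ} (v : Fin d → ℝ) :
    ∃ w : Fin d → ℝ, ‖w‖ ≤ 1 ∧ w ⬝ᵥ v = ‖v‖ := by
  obtain ⟨g, hg, hgv⟩ := exists_dual_vector'' ℝ v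
  refine ⟨fun i => g (Pi.single i 1), ?_, ?_⟩
  · refine (pi_norm_le_iff_of_nonneg zero_le_one).2 fun i => ?_
    calc ‖g (Pi.single i 1)‖ ≤ ‖g‖ * ‖(Pi.single i 1 : Fin d → ℝ)‖ := g.le_opNorm _
      _ ≤ 1 := by rw [Pi.norm_single, norm_one, mul_one]; exact hg
  · calc (fun i => g (Pi.single i 1)) ⬝ᵥ v = g (∑ i, v i • Pi.single i 1) := by
          simp only [dotProduct, map_sum, map_smul, smul_eq_mul, mul_comm]
      _ = ‖v‖ := by
          rw [show ∑ i, v i • Pi.single i (1 : ℝ) = v by ext; simp [Pi.single_apply], hgv]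
          rfl

lemma sum_oddSlots_dotProduct_interleave {d : ℕ} (v : ℕ → Fin d → ℝ) (F : ℝ → Fin d → ℝ)
    (a : ℝ) (r s : ℕ → ℝ) (k : ℕ) :
    ∑ i : Fin (2 * k), oddSlots v i ⬝ᵥ (F (interleave a r s (i + 1)) - F (interleave a r s i))
      = ∑ j ∈ range k, v j ⬝ᵥ (F (s j) - F (r j)) := by
  rw [Fin.sum_univ_eq_sum_range
    (fun i => oddSlots v i ⬝ᵥ (F (interleave a r s (i + 1)) - F (interleave a r s i))),
    sum_range_two_mul_of_even_eq_zero (by simp)]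
  simp

lemma norm_sum_intervalIntegral_smul_oddSlots_le {E : Type*} [NormedAddCommGroup E]
    [NormedSpace ℝ E] {g h : ℝ → ℝ} (hgh : ∀ y, ‖g y‖ ≤ h y)
    (hh : ∀ a b, IntervalIntegrable h volume a b) {a : ℝ} {r s : ℕ → ℝ} {k : ℕ}
    (hrs : ∀ j < k, r j ≤ s j) {v : ℕ → E} {A : ℝ} (hv : ∀ j, ‖v j‖ ≤ A) (x : ℝ) :
    ‖∑ i : Fin (2 * k),
        (∫ y in (x + interleave a r s i)..(x + interleave a r s (i + 1)), g y) • oddSlots v i‖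
      ≤ A * ∑ j ∈ range k, ∫ y in (x + r j)..(x + s j), h y := by
  set G : ℕ → E := fun i =>
    (∫ y in (x + interleave a r s i)..(x + interleave a r s (i + 1)), g y) • oddSlots v i
  calc ‖∑ i : Fin (2 * k), G i‖ ≤ ∑ i : Fin (2 * k), ‖G i‖ := norm_sum_le _ _
    _ = ∑ j ∈ range k, ‖G (2 * j + 1)‖ := by
        rw [Fin.sum_univ_eq_sum_range (fun i => ‖G i‖),
          sum_range_two_mul_of_even_eq_zero (by simp [G])]
    _ ≤ ∑ j ∈ range k, A * ∫ y in (x + r j)..(x + s j), h y := by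
        refine sum_le_sum fun j hj => ?_
        have hxrs : x + r j ≤ x + s j := by linarith [hrs j (mem_range.1 hj)]
        have hK := intervalIntegral.norm_integral_le_of_norm_le hxrs
          (ae_of_all _ fun y _ => hgh y) (hh _ _)
        have hK0 : 0 ≤ ∫ y in (x + r j)..(x + s j), h y :=
          intervalIntegral.integral_nonneg hxrs fun y _ => (norm_nonneg _).trans (hgh y)
        simp only [G, interleave_two_mul_add_one, interleave_two_mul_add_two,
          oddSlots_two_mul_add_one, norm_smul]
        rw [mul_comm A]
        exact mul_le_mul hK (hv j) (norm_nonneg _) hK0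
    _ = A * ∑ j ∈ range k, ∫ y in (x + r j)..(x + s j), h y := (mul_sum _ _ _).symm

lemma intervalIntegrable_abs_rpow {c : ℝ} (hc : -1 < c) (a b : ℝ) :
    IntervalIntegrable (fun y : ℝ => |y| ^ c) volume a b := by
  have hpos : ∀ t, 0 ≤ t → IntervalIntegrable (fun y : ℝ => |y| ^ c) volume 0 t := by
    intro t ht
    refine (intervalIntegral.intervalIntegrable_rpow' hc).congr fun y hy => ?_
    rw [uIoc_of_le ht] at hy
    simp [abs_of_pos hy.1]
  have h0 : ∀ t, IntervalIntegrable (fun y : ℝ => |y| ^ c) volume 0 t := by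
    intro t
    rcases le_total 0 t with ht | ht
    · exact hpos t ht
    · rw [IntervalIntegrable.iff_comp_neg]
      simpa [abs_neg] using hpos (-t) (by linarith)
  exact (h0 a).symm.trans (h0 b)

lemma integral_abs_rpow_symm {c ℓ : ℝ} (hc : -1 < c) (hℓ : 0 ≤ ℓ) :
    ∫ y in -ℓ..ℓ, |y| ^ c = 2 * ℓ ^ (c + 1) / (c + 1) := by
  have hright : ∫ y in 0..ℓ, |y| ^ c = ℓ ^ (c + 1) / (c + 1) := by
    rw [intervalIntegral.integral_congr (g := fun y : ℝ => y ^ c), integral_rpow (Or.inl hc),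
      zero_rpow (by linarith), sub_zero]
    intro y hy
    rw [uIcc_of_le hℓ] at hy
    simp [abs_of_nonneg hy.1]
  have hleft : ∫ y in -ℓ..0, |y| ^ c = ∫ y in 0..ℓ, |y| ^ c := by
    simpa [abs_neg] using
      (intervalIntegral.integral_comp_neg (a := 0) (b := ℓ) (fun y => |y| ^ c)).symm
  rw [← intervalIntegral.integral_add_adjacent_intervals (intervalIntegrable_abs_rpow hc _ _)
    (intervalIntegrable_abs_rpow hc _ _), hleft, hright]
  ring

lemma intervalIntegral_le_integral {φ : ℝ → ℝ} (hφ : 0 ≤ φ) (hint : Integrable φ) (a b : ℝ) :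
    ∫ y in a..b, φ y ≤ ∫ y, φ y := by
  rcases le_total a b with hab | hba
  · rw [intervalIntegral.integral_of_le hab]
    exact setIntegral_le_integral hint (ae_of_all _ hφ)
  · have : 0 ≤ ∫ y in Ioc b a, φ y := setIntegral_nonneg measurableSet_Ioc fun y _ => hφ y
    rw [intervalIntegral.integral_symm, intervalIntegral.integral_of_le hba]
    linarith [integral_nonneg (μ := volume) hφ]

lemma sum_integral_le_integral_of_chain {φ : ℝ → ℝ} (hφ : 0 ≤ φ) (hint : Integrable φ)
    {r s : ℕ → ℝ} {k : ℕ} (hrs : ∀ j < k, r j ≤ s j) (hsr : ∀ j, j + 1 < k → s j ≤ r (j + 1)) :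
    ∑ j ∈ range k, ∫ y in r j..s j, φ y ≤ ∫ y, φ y := by
  set t := interleave (r 0) r s
  have ht : ∀ i < 2 * k, t i ≤ t (i + 1) := interleave_le_succ (fun _ => le_rfl) hrs hsr
  calc ∑ j ∈ range k, ∫ y in r j..s j, φ y
      ≤ ∑ i ∈ range (2 * k), ∫ y in t i..t (i + 1), φ y := by
        rw [sum_range_two_mul]
        refine sum_le_sum fun j hj => ?_
        have : 0 ≤ ∫ y in t (2 * j)..t (2 * j + 1), φ y :=
          intervalIntegral.integral_nonneg (ht _ (by simp at hj; omega)) fun y _ => hφ y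
        simpa [t] using this
    _ = ∫ y in t 0..t (2 * k), φ y :=
        intervalIntegral.sum_integral_adjacent_intervals fun _ _ => hint.intervalIntegrable
    _ ≤ ∫ y, φ y := intervalIntegral_le_integral hφ hint _ _

lemma sum_integral_abs_rpow_le {α ℓ : ℝ} (hα0 : 0 ≤ α) (hα1 : α < 1) (hℓ : 0 < ℓ)
    {r s : ℕ → ℝ} {k : ℕ} (hrs : ∀ j < k, r j ≤ s j) (hsr : ∀ j, j + 1 < k → s j ≤ r (j + 1))
    (hsum : ∑ j ∈ range k, (s j - r j) ≤ ℓ) :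
    ∑ j ∈ range k, ∫ y in r j..s j, |y| ^ (-α) ≤ (1 + 2 / (1 - α)) * ℓ ^ (1 - α) := by
  set φ := (Ioc (-ℓ) ℓ).indicator fun y : ℝ => |y| ^ (-α)
  have hint : ∀ a b, IntervalIntegrable (fun y : ℝ => |y| ^ (-α)) volume a b :=
    intervalIntegrable_abs_rpow (by linarith)
  have hφ : 0 ≤ φ := indicator_nonneg fun y _ => rpow_nonneg (abs_nonneg y) _
  have hφint : Integrable φ := (integrable_indicator_iff measurableSet_Ioc).2 (hint (-ℓ) ℓ).1
  have hφmass : ∫ y, φ y = 2 / (1 - α) * ℓ ^ (1 - α) := by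
    rw [integral_indicator measurableSet_Ioc, ← intervalIntegral.integral_of_le (by linarith),
      integral_abs_rpow_symm (by linarith) hℓ.le, neg_add_eq_sub]
    ring
  -- the part of `|y| ^ (-α)` above `ℓ ^ (-α)` sits in `(-ℓ, ℓ]`, which disjoint slots cover once
  have hsplit : ∀ y, |y| ^ (-α) ≤ ℓ ^ (-α) + φ y := by
    intro y
    by_cases hy : y ∈ Ioc (-ℓ) ℓ
    · simp [φ, indicator_of_mem hy, rpow_nonneg hℓ.le]
    · have hℓy : ℓ ≤ |y| := by
        simp only [Set.mem_Ioc, not_and_or, not_lt, not_le] at hy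
        rcases hy with hy | hy
        · exact le_abs.2 (Or.inr (by linarith))
        · exact le_abs.2 (Or.inl hy.le)
      rw [show φ y = 0 from indicator_of_notMem hy _, add_zero]
      exact rpow_le_rpow_of_nonpos hℓ hℓy (by linarith)
  calc ∑ j ∈ range k, ∫ y in r j..s j, |y| ^ (-α)
      ≤ ∑ j ∈ range k, ((s j - r j) * ℓ ^ (-α) + ∫ y in r j..s j, φ y) := by
        refine sum_le_sum fun j hj => ?_
        rw [← smul_eq_mul, ← intervalIntegral.integral_const,
          ← intervalIntegral.integral_add intervalIntegrable_const hφint.intervalIntegrable]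
        exact intervalIntegral.integral_mono_on (hrs j (mem_range.1 hj)) (hint _ _)
          (intervalIntegrable_const.add hφint.intervalIntegrable) fun y _ => hsplit y
    _ = (∑ j ∈ range k, (s j - r j)) * ℓ ^ (-α) + ∑ j ∈ range k, ∫ y in r j..s j, φ y := by
        rw [sum_add_distrib, sum_mul]
    _ ≤ ℓ * ℓ ^ (-α) + ∫ y, φ y := by
        gcongr
        exact sum_integral_le_integral_of_chain hφ hφint hrs hsr
    _ = (1 + 2 / (1 - α)) * ℓ ^ (1 - α) := by
        rw [hφmass, sub_eq_add_neg, rpow_add hℓ, rpow_one]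
        ring

lemma integral_abs_rpow_le_of_three_le {α x a b : ℝ} (hα0 : 0 ≤ α) (hα1 : α < 1)
    (hx : 3 ≤ |x|) (hxa : x ≤ a) (hab : a ≤ b) (hbx : b ≤ x + 1) :
    ∫ y in a..b, |y| ^ (-α) ≤ (b - a) * (2 * (1 + |x|) ^ (-α)) := by
  have hpoint : ∀ y ∈ Icc a b, |y| ^ (-α) ≤ 2 * (1 + |x|) ^ (-α) := by
    intro y hy
    have hxy : (1 + |x|) / 2 ≤ |y| := by
      have h1 := abs_sub_abs_le_abs_sub x y
      have h2 : |x - y| ≤ 1 := abs_le.2 ⟨by linarith [hy.2], by linarith [hy.1]⟩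
      linarith
    calc |y| ^ (-α) ≤ ((1 + |x|) / 2) ^ (-α) :=
          rpow_le_rpow_of_nonpos (by positivity) hxy (by linarith)
      _ = 2 ^ α * (1 + |x|) ^ (-α) := by
          rw [div_rpow (by positivity) zero_le_two, rpow_neg zero_le_two, div_inv_eq_mul,
            mul_comm]
      _ ≤ 2 * (1 + |x|) ^ (-α) := by
          gcongr
          simpa using rpow_le_rpow_of_exponent_le one_le_two hα1.le
  calc ∫ y in a..b, |y| ^ (-α) ≤ ∫ y in a..b, 2 * (1 + |x|) ^ (-α) :=
        intervalIntegral.integral_mono_on hab (intervalIntegrable_abs_rpow (by linarith) a b)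
          intervalIntegrable_const hpoint
    _ = (b - a) * (2 * (1 + |x|) ^ (-α)) := by
        rw [intervalIntegral.integral_const, smul_eq_mul]

lemma sum_integral_abs_rpow_le_of_subset_unit {α ℓ : ℝ} (hα0 : 0 ≤ α) (hα1 : α < 1)
    {r s : ℕ → ℝ} {k : ℕ} (hr0 : ∀ j < k, 0 ≤ r j) (hrs : ∀ j < k, r j ≤ s j)
    (hs1 : ∀ j < k, s j ≤ 1) (hsr : ∀ j, j + 1 < k → s j ≤ r (j + 1)) (hℓ : 0 < ℓ)
    (hsum : ∑ j ∈ range k, (s j - r j) ≤ ℓ) (hℓ1 : ℓ ≤ 1)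
    (hsmall : (1 + 2 / (1 - α)) * ℓ ^ (1 - α) ≤ 2 * 4 ^ (-α)) (x : ℝ) :
    ∑ j ∈ range k, ∫ y in (x + r j)..(x + s j), |y| ^ (-α) ≤ 2 * (1 + |x|) ^ (-α) := by
  by_cases hx : 3 ≤ |x|
  · calc ∑ j ∈ range k, ∫ y in (x + r j)..(x + s j), |y| ^ (-α)
        ≤ ∑ j ∈ range k, (s j - r j) * (2 * (1 + |x|) ^ (-α)) := by
          refine sum_le_sum fun j hj => ?_
          have hj := mem_range.1 hj
          have := integral_abs_rpow_le_of_three_le (a := x + r j) (b := x + s j) hα0 hα1 hx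
            (by linarith [hr0 j hj]) (by linarith [hrs j hj]) (by linarith [hs1 j hj])
          rwa [add_sub_add_left_eq_sub] at this
      _ ≤ ℓ * (2 * (1 + |x|) ^ (-α)) := by rw [← sum_mul]; gcongr
      _ ≤ 2 * (1 + |x|) ^ (-α) := mul_le_of_le_one_left (by positivity) hℓ1
  · calc ∑ j ∈ range k, ∫ y in (x + r j)..(x + s j), |y| ^ (-α)
        ≤ (1 + 2 / (1 - α)) * ℓ ^ (1 - α) :=
          sum_integral_abs_rpow_le hα0 hα1 hℓ (fun j hj => by linarith [hrs j hj])
            (fun j hj => by linarith [hsr j hj]) (by simpa using hsum)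
      _ ≤ 2 * 4 ^ (-α) := hsmall
      _ ≤ 2 * (1 + |x|) ^ (-α) := by
          have : (1 + |x|) ^ (-α) ≥ 4 ^ (-α) :=
            rpow_le_rpow_of_nonpos (by positivity) (by linarith [not_le.1 hx]) (by linarith)
          linarith

lemma sq_le_rpow_mul_rpow {a b c θ : ℝ} (ha : 0 ≤ a) (hab : a ≤ b) (hac : a ≤ c)
    (hθ0 : 0 ≤ θ) (hθ2 : θ ≤ 2) : a ^ 2 ≤ b ^ (2 - θ) * c ^ θ := by
  calc a ^ 2 = a ^ (2 - θ) * a ^ θ := by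
        rw [← rpow_add' ha (by norm_num), sub_add_cancel, rpow_two]
    _ ≤ b ^ (2 - θ) * c ^ θ :=
        mul_le_mul (rpow_le_rpow ha hab (by linarith)) (rpow_le_rpow ha hac hθ0)
          (rpow_nonneg ha _) (rpow_nonneg (ha.trans hab) _)

lemma integrable_mul_one_add_abs_rpow {α γ c : ℝ} (hc : 0 ≤ c) (hαγ : 1 < α * γ) :
    Integrable fun x : ℝ => (c * (1 + |x|) ^ (-α)) ^ γ := by
  have := (integrable_one_add_norm (E := ℝ) (μ := volume) (r := α * γ)
    (by simpa using hαγ)).const_mul (c ^ γ)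
  refine this.congr (ae_of_all _ fun x => ?_)
  simp only [Real.norm_eq_abs]
  rw [mul_rpow hc (rpow_nonneg (by positivity) _), ← rpow_mul (by positivity), neg_mul]

lemma norm_integral_le_of_sq_bound {Ω E : Type*} [MeasurableSpace Ω] {μ : Measure Ω}
    [NormedAddCommGroup E] {Λ : E → ℝ} {C δ : ℝ} (hC : 0 ≤ C)
    (hquad : ∀ l : E, ‖l‖ ≤ δ → |Λ l| ≤ C * ‖l‖ ^ 2) {w : Ω → E} {S m : Ω → ℝ} {c β γ : ℝ}
    (hc : 0 ≤ c) (hw : ∀ x, ‖w x‖ ≤ c * S x) (hS0 : ∀ x, 0 ≤ S x) (hSβ : ∀ x, S x ≤ β)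
    (hSm : ∀ x, S x ≤ m x) (hδ : c * β ≤ δ) (hγ0 : 0 ≤ γ) (hγ2 : γ ≤ 2)
    (hm : Integrable (fun x => m x ^ γ) μ) :
    ‖∫ x, Λ (w x) ∂μ‖ ≤ C * c ^ 2 * β ^ (2 - γ) * ∫ x, m x ^ γ ∂μ := by
  rw [← integral_const_mul]
  refine norm_integral_le_of_norm_le (hm.const_mul _) (ae_of_all _ fun x => ?_)
  have hwδ : ‖w x‖ ≤ δ := (hw x).trans (le_trans (by gcongr; exact hSβ x) hδ)
  calc ‖Λ (w x)‖ ≤ C * ‖w x‖ ^ 2 := hquad _ hwδ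
    _ ≤ C * (c * S x) ^ 2 := by gcongr; exact hw x
    _ = C * c ^ 2 * S x ^ 2 := by ring
    _ ≤ C * c ^ 2 * (β ^ (2 - γ) * m x ^ γ) := by
        gcongr
        exact sq_le_rpow_mul_rpow (hS0 x) (hSβ x) (hSm x) hγ0 hγ2
    _ = C * c ^ 2 * β ^ (2 - γ) * m x ^ γ := by ring

lemma norm_integral_rate_oddSlots_le {E : Type*} [NormedAddCommGroup E] [NormedSpace ℝ E]
    {α : ℝ} (hα0 : 0 ≤ α) (hα1 : α < 1) {Λ : E → ℝ} {C δ : ℝ} (hC : 0 ≤ C)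
    (hquad : ∀ l : E, ‖l‖ ≤ δ → |Λ l| ≤ C * ‖l‖ ^ 2) {g : ℝ → ℝ}
    (hg : ∀ y, ‖g y‖ ≤ |y| ^ (-α)) {r s : ℕ → ℝ} {k : ℕ} (hr0 : ∀ j < k, 0 ≤ r j)
    (hrs : ∀ j < k, r j ≤ s j) (hs1 : ∀ j < k, s j ≤ 1)
    (hsr : ∀ j, j + 1 < k → s j ≤ r (j + 1)) {v : ℕ → E} {A : ℝ} (hv : ∀ j, ‖v j‖ ≤ A)
    {ℓ : ℝ} (hℓ : 0 < ℓ) (hsum : ∑ j ∈ range k, (s j - r j) ≤ ℓ) (hℓ1 : ℓ ≤ 1)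
    (hsmall : (1 + 2 / (1 - α)) * ℓ ^ (1 - α) ≤ 2 * 4 ^ (-α))
    (hδ : (1 - α) * A * ((1 + 2 / (1 - α)) * ℓ ^ (1 - α)) ≤ δ)
    {γ : ℝ} (hγ0 : 0 ≤ γ) (hγ2 : γ ≤ 2) (hαγ : 1 < α * γ) :
    ‖∫ x, Λ ((1 - α) • ∑ i : Fin (2 * k),
        (∫ y in (x + interleave 0 r s i)..(x + interleave 0 r s (i + 1)), g y) • oddSlots v i)‖
      ≤ C * ((1 - α) * A) ^ 2 * ((1 + 2 / (1 - α)) * ℓ ^ (1 - α)) ^ (2 - γ) *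
        ∫ x : ℝ, (2 * (1 + |x|) ^ (-α)) ^ γ := by
  have hA : 0 ≤ A := (norm_nonneg _).trans (hv 0)
  have hint : ∀ a b, IntervalIntegrable (fun y : ℝ => |y| ^ (-α)) volume a b :=
    intervalIntegrable_abs_rpow (by linarith)
  refine norm_integral_le_of_sq_bound hC hquad (by nlinarith) (fun x => ?_) (fun x => ?_)
    (fun x => ?_) (sum_integral_abs_rpow_le_of_subset_unit hα0 hα1 hr0 hrs hs1 hsr hℓ hsum hℓ1
      hsmall) hδ hγ0 hγ2 (integrable_mul_one_add_abs_rpow zero_le_two hαγ)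
  · rw [norm_smul, Real.norm_of_nonneg (by linarith), mul_assoc]
    exact mul_le_mul_of_nonneg_left
      (norm_sum_intervalIntegral_smul_oddSlots_le hg hint hrs hv x) (by linarith)
  · exact sum_nonneg fun j hj => intervalIntegral.integral_nonneg
      (by linarith [hrs j (mem_range.1 hj)]) fun y _ => rpow_nonneg (abs_nonneg y) _
  · exact sum_integral_abs_rpow_le hα0 hα1 hℓ (fun j hj => by linarith [hrs j hj])
      (fun j hj => by linarith [hsr j hj]) (by simpa using hsum)

theorem tendsto_integral_rate_oddSlots {E : Type*} [NormedAddCommGroup E] [NormedSpace ℝ E]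
    {α : ℝ} (hα : 1 / 2 < α) (hα1 : α < 1) {Λ : E → ℝ} {C δ : ℝ} (hC : 0 ≤ C) (hδ : 0 < δ)
    (hquad : ∀ l : E, ‖l‖ ≤ δ → |Λ l| ≤ C * ‖l‖ ^ 2) {g : ℝ → ℝ}
    (hg : ∀ y, ‖g y‖ ≤ |y| ^ (-α)) {kn : ℕ → ℕ} {r s : ℕ → ℕ → ℝ}
    (hord : ∀ n, ∀ i < kn n, 0 ≤ r n i ∧ r n i < s n i ∧ s n i ≤ 1 ∧
      (i + 1 < kn n → s n i ≤ r n (i + 1)))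
    (hkn : ∀ n, kn n ≠ 0)
    (hlen : Tendsto (fun n => ∑ i ∈ range (kn n), (s n i - r n i)) atTop (𝓝 0))
    {v : ℕ → ℕ → E} {A : ℝ} (hv : ∀ n j, ‖v n j‖ ≤ A) :
    Tendsto (fun n => ∫ x, Λ ((1 - α) • ∑ i : Fin (2 * kn n),
        (∫ y in (x + interleave 0 (r n) (s n) i)..(x + interleave 0 (r n) (s n) (i + 1)), g y) •
          oddSlots (v n) i)) atTop (𝓝 0) := by
  have h1α : 0 < 1 - α := by linarith
  set ℓ := fun n => ∑ i ∈ range (kn n), (s n i - r n i)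
  set β := fun n => (1 + 2 / (1 - α)) * ℓ n ^ (1 - α)
  -- any `γ` with `1 < α * γ < 2 * α` works: `(1 + |x|) ^ (-α * γ)` has to be integrable and
  -- `β n ^ (2 - γ)` has to tend to `0`
  set γ := 1 + 1 / (2 * α)
  have hγ2 : γ < 2 := by
    have : 1 / (2 * α) < 1 := (div_lt_one (by linarith)).2 (by linarith)
    linarith
  have hαγ : 1 < α * γ := by
    have : α * γ = α + 1 / 2 := by simp only [γ]; field_simp
    linarith
  have hℓ : ∀ n, 0 < ℓ n := fun n =>
    sum_pos (fun i hi => sub_pos.2 (hord n i (mem_range.1 hi)).2.1) (nonempty_range_iff.2 (hkn n))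
  have hβ : Tendsto β atTop (𝓝 0) := by
    simpa [zero_rpow h1α.ne'] using
      (hlen.rpow_const (Or.inr h1α.le)).const_mul (1 + 2 / (1 - α))
  have hrate : Tendsto (fun n => C * ((1 - α) * A) ^ 2 * β n ^ (2 - γ) *
      ∫ x : ℝ, (2 * (1 + |x|) ^ (-α)) ^ γ) atTop (𝓝 0) := by
    simpa [zero_rpow (by linarith : 0 < 2 - γ).ne'] using
      ((hβ.rpow_const (p := 2 - γ) (Or.inr (by linarith))).const_mul _).mul_const _
  refine squeeze_zero_norm' ?_ hrate
  filter_upwards [hlen.eventually_le_const one_pos,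
    hβ.eventually_le_const (by positivity : (0 : ℝ) < 2 * 4 ^ (-α)),
    (by simpa using hβ.const_mul ((1 - α) * A) : Tendsto (fun n => (1 - α) * A * β n) atTop
      (𝓝 0)).eventually_le_const hδ] with n hℓ1 hsmall hsmallδ
  exact norm_integral_rate_oddSlots_le (by linarith) hα1 hC hquad hg
    (fun j hj => (hord n j hj).1) (fun j hj => (hord n j hj).2.1.le)
    (fun j hj => (hord n j hj).2.2.1) (fun j hj => (hord n j (by omega)).2.2.2 hj) (hv n)
    (hℓ n) le_rfl hℓ1 hsmall hsmallδ (by positivity) hγ2.le hαγ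

theorem stmt19_general
    {d : ℕ} (α p q : ℝ) (hα : 1 / 2 < α) (hα1 : α < 1)
    (hp0 : 0 ≤ p) (hp1 : p ≤ 1) (hq : q = 1 - p)
    (Λ : (Fin d → ℝ) → ℝ)
    (hquad : ∃ C δ : ℝ, 0 < δ ∧ 0 < C ∧
      ∀ l : Fin d → ℝ, ‖l‖ ≤ δ → |Λ l| ≤ C * ‖l‖ ^ 2)
    (f : ℝ → Fin d → ℝ)
    (ε : ℝ) (hε : 0 < ε)
    (kn : ℕ → ℕ) (r s : ℕ → ℕ → ℝ)
    (hord : ∀ n, ∀ i < kn n, 0 ≤ r n i ∧ r n i < s n i ∧ s n i ≤ 1 ∧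
      (i + 1 < kn n → s n i ≤ r n (i + 1)))
    (hlen : Filter.Tendsto
      (fun n => ∑ i ∈ Finset.range (kn n), (s n i - r n i))
      Filter.atTop (nhds 0))
    (hvar : ∀ n, ε ≤ ∑ i ∈ Finset.range (kn n), ‖f (s n i) - f (r n i)‖) :
    ∀ M : ℝ, ∃ (k : ℕ) (t : ℕ → ℝ) (lam : Fin k → Fin d → ℝ),
      t 0 = 0 ∧ (∀ i < k, t i ≤ t (i + 1)) ∧ t k ≤ 1 ∧
      M < (∑ i : Fin k, lam i ⬝ᵥ (f (t (i.val + 1)) - f (t i.val))) -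
        ∫ x : ℝ, Λ ((1 - α) •
          ∑ i : Fin k,
            (∫ y in (x + t i.val)..(x + t (i.val + 1)),
              |y| ^ (-α) * (if 0 ≤ y then p else q)) • lam i) := by
  intro M
  obtain ⟨C, δ, hδ, hC, hquad⟩ := hquad
  have hg : ∀ y : ℝ, ‖|y| ^ (-α) * (if 0 ≤ y then p else q)‖ ≤ |y| ^ (-α) := by
    intro y
    rw [norm_mul, Real.norm_of_nonneg (rpow_nonneg (abs_nonneg y) _)]
    refine mul_le_of_le_one_right (rpow_nonneg (abs_nonneg y) _) ?_
    split_ifs <;> rw [Real.norm_eq_abs, abs_le] <;> constructor <;> linarith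
  have hkn : ∀ n, kn n ≠ 0 := fun n h => by simpa [h] using (hε.trans_le (hvar n)).ne'
  choose u hu1 hu2 using fun n j => exists_dotProduct_eq_norm (f (s n j) - f (r n j))
  set A := (|M| + 1) / ε
  have hv : ∀ n j, ‖A • u n j‖ ≤ A := fun n j => by
    rw [norm_smul, Real.norm_of_nonneg (by positivity)]
    exact mul_le_of_le_one_right (by positivity) (hu1 n j)
  obtain ⟨n, hn⟩ := ((tendsto_integral_rate_oddSlots hα hα1 hC.le hδ hquad hg hord hkn hlen
    hv).eventually_lt_const one_pos).exists
  refine ⟨2 * kn n, interleave 0 (r n) (s n), fun i => oddSlots (fun j => A • u n j) i, rfl,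
    interleave_le_succ (fun hk => (hord n 0 hk).1) (fun j hj => (hord n j hj).2.1.le)
      (fun j hj => (hord n j (by omega)).2.2.2 hj),
    interleave_two_mul_le zero_le_one (fun j hj => (hord n j hj).2.2.1), ?_⟩
  have hpair : A * ε ≤ ∑ i : Fin (2 * kn n), oddSlots (fun j => A • u n j) i ⬝ᵥ
      (f (interleave 0 (r n) (s n) (i + 1)) - f (interleave 0 (r n) (s n) i)) := by
    simp only [sum_oddSlots_dotProduct_interleave, smul_dotProduct, hu2, smul_eq_mul, ← mul_sum]
    exact mul_le_mul_of_nonneg_left (hvar n) (by positivity)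
  have hAε : A * ε = |M| + 1 := div_mul_cancel₀ _ hε.ne'
  linarith [le_abs_self M]

/-- If `f` is not absolutely continuous (witnessed by families of disjoint
intervals of total length tending to `0` on which the variation of `f` stays
`≥ ε`), then the long-memory rate `sup_{partitions, λ̄} ∑ λᵢ·(f(tᵢ)−f(tᵢ₋₁)) −
Λ^{rl}_{t₁,…,t_k}(λ̄)` is `+∞`. -/
theorem stmt19
    {d : ℕ} (α p q : ℝ) (hα : 1 / 2 < α) (hα1 : α < 1)
    (hp0 : 0 ≤ p) (hp1 : p ≤ 1) (hq : q = 1 - p)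
    (Λ : (Fin d → ℝ) → ℝ) (hconv : ConvexOn ℝ Set.univ Λ) (hΛ0 : Λ 0 = 0)
    (hquad : ∃ C δ : ℝ, 0 < δ ∧ 0 < C ∧
      ∀ l : Fin d → ℝ, ‖l‖ ≤ δ → |Λ l| ≤ C * ‖l‖ ^ 2)
    (f : ℝ → Fin d → ℝ) (hf0 : f 0 = 0)
    (hfL1 : IntegrableOn f (Set.Ioc 0 1) volume)
    (ε : ℝ) (hε : 0 < ε)
    (kn : ℕ → ℕ) (r s : ℕ → ℕ → ℝ)
    (hord : ∀ n, ∀ i < kn n, 0 ≤ r n i ∧ r n i < s n i ∧ s n i ≤ 1 ∧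
      (i + 1 < kn n → s n i ≤ r n (i + 1)))
    (hlen : Filter.Tendsto
      (fun n => ∑ i ∈ Finset.range (kn n), (s n i - r n i))
      Filter.atTop (nhds 0))
    (hvar : ∀ n, ε ≤ ∑ i ∈ Finset.range (kn n), ‖f (s n i) - f (r n i)‖) :
    ∀ M : ℝ, ∃ (k : ℕ) (t : ℕ → ℝ) (lam : Fin k → Fin d → ℝ),
      t 0 = 0 ∧ (∀ i < k, t i ≤ t (i + 1)) ∧ t k ≤ 1 ∧
      M < (∑ i : Fin k, lam i ⬝ᵥ (f (t (i.val + 1)) - f (t i.val))) -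
        ∫ x : ℝ, Λ ((1 - α) •
          ∑ i : Fin k,
            (∫ y in (x + t i.val)..(x + t (i.val + 1)),
              |y| ^ (-α) * (if 0 ≤ y then p else q)) • lam i) :=
  stmt19_general α p q hα hα1 hp0 hp1 hq Λ hquad f ε hε kn r s hord hlen hvar
end
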